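/- In a triangle-free S_{1,2,2}-free graph G with an induced 5-cycle c_1...c_5 (indices mod 5), let W_i be the set of vertices outside the cycle adjacent to exactly c_{i-1} and c_{i+1} among cycle vertices, and V_i the set of vertices outside the cycle adjacent only to c_i. Then W_i is complete to V_i and anti-complete to V_{i-1} ∪ V_{i+1}. -/

import Mathlib

variable {V : Type*}

/-- `S_{1,2,2}`: the 6-vertex tree obtained from the claw `K_{1,3}` by subdividing two
of its edges once each. Centre `0`, pendant vertex `1`, paths `0-2-3` and `0-4-5`. -/
def S122 : SimpleGraph (Fin 6) :=
  SimpleGraph.fromEdgeSet {s(0,1), s(0,2), s(2,3), s(0,4), s(4,5)}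

/-- `V_i`: the vertices outside the 5-cycle `c` whose unique neighbour on the cycle is `c i`. -/
def Vset (G : SimpleGraph V) (c : ZMod 5 → V) (i : ZMod 5) : Set V :=
  {v | v ∉ Set.range c ∧ ∀ j, G.Adj v (c j) ↔ j = i}

/-- `W_i`: the vertices outside the 5-cycle `c` whose neighbours on the cycle are exactly
`c (i-1)` and `c (i+1)`. -/
def Wset (G : SimpleGraph V) (c : ZMod 5 → V) (i : ZMod 5) : Set V :=
  {v | v ∉ Set.range c ∧ ∀ j, G.Adj v (c j) ↔ (j = i - 1 ∨ j = i + 1)}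

/-!
If `w ∈ W_i` and `v ∈ V_i` were non-adjacent, then `c (i+1)` with the pendant vertex `w` and
the two paths `c (i+1) - c (i+2) - c (i+3)` and `c (i+1) - c i - v` would be an induced
`S_{1,2,2}`. A vertex of `V_{i±1}` shares the neighbour `c (i±1)` with every `w ∈ W_i`, so an
edge between them would close a triangle.
-/

namespace SimpleGraph

/-- Injectivity comes for free: vertices with the same image have the same neighbourhood. -/
def Embedding.ofAdjIff {W : Type*} {H : SimpleGraph W} {G : SimpleGraph V}
    (hH : Function.Injective H.neighborSet) (f : W → V)
    (hf : ∀ a b, G.Adj (f a) (f b) ↔ H.Adj a b) : H ↪g G where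
  toFun := f
  inj' a b hab := hH <| Set.ext fun x => by
    simp only [mem_neighborSet, ← hf, hab]
  map_rel_iff' := hf _ _

end SimpleGraph

open SimpleGraph

theorem S122_adj_iff {a b : Fin 6} :
    S122.Adj a b ↔ a ≠ b ∧ s(a, b) ∈ ({s(0,1), s(0,2), s(2,3), s(0,4), s(4,5)} : Finset _) := by
  simp [S122, and_comm]

instance : DecidableRel S122.Adj := fun _ _ => decidable_of_iff _ S122_adj_iff.symm

theorem S122_neighborSet_injective : Function.Injective S122.neighborSet := by
  have twin_free : ∀ a b : Fin 6, (∀ x, S122.Adj a x ↔ S122.Adj b x) → a = b := by decide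
  exact fun a b h => twin_free a b fun x => Set.ext_iff.mp h x

section FiveCycle

variable {G : SimpleGraph V} {c : ZMod 5 → V} {i : ZMod 5} {w v : V}

theorem adj_cycle_add (hC : ∀ i j, G.Adj (c i) (c j) ↔ (j = i + 1 ∨ i = j + 1)) (a b : ZMod 5) :
    G.Adj (c (i + a)) (c (i + b)) ↔ (b = a + 1 ∨ a = b + 1) := by
  rw [hC, add_assoc, add_assoc, add_right_inj, add_right_inj]

theorem adj_add_of_mem_Wset (hw : w ∈ Wset G c i) (a : ZMod 5) :
    G.Adj w (c (i + a)) ↔ (a = 4 ∨ a = 1) := by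
  rw [hw.2, sub_eq_add_neg, show (-1 : ZMod 5) = 4 by decide, add_right_inj, add_right_inj]

theorem adj_add_of_mem_Vset (hv : v ∈ Vset G c i) (a : ZMod 5) :
    G.Adj v (c (i + a)) ↔ a = 0 := by
  rw [hv.2, add_eq_left]

theorem adj_of_mem_Wset_of_mem_Vset (hS : IsEmpty (S122 ↪g G))
    (hC : ∀ i j, G.Adj (c i) (c j) ↔ (j = i + 1 ∨ i = j + 1))
    (hw : w ∈ Wset G c i) (hv : v ∈ Vset G c i) : G.Adj w v := by
  by_contra hwv
  have hcw : ∀ a, G.Adj (c (i + a)) w ↔ (a = 4 ∨ a = 1) :=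
    fun a => (G.adj_comm _ _).trans (adj_add_of_mem_Wset hw a)
  have hcv : ∀ a, G.Adj (c (i + a)) v ↔ a = 0 :=
    fun a => (G.adj_comm _ _).trans (adj_add_of_mem_Vset hv a)
  have hvw : ¬ G.Adj v w := fun h => hwv h.symm
  -- `c (i + 0)` rather than `c i`, so that the adjacency lemmas below rewrite it
  let f : Fin 6 → V := ![c (i + 1), w, c (i + 2), c (i + 3), c (i + 0), v]
  have hf : ∀ a b, G.Adj (f a) (f b) ↔ S122.Adj a b := by
    intro a b
    fin_cases a <;> fin_cases b <;>
      simp only [f, Fin.zero_eta, Fin.mk_one, Fin.reduceFinMk, Matrix.cons_val, adj_cycle_add hC,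
        adj_add_of_mem_Wset hw, adj_add_of_mem_Vset hv, hcw, hcv, hwv, hvw, SimpleGraph.irrefl] <;>
      decide
  exact hS.elim (Embedding.ofAdjIff S122_neighborSet_injective f hf)

theorem not_adj_of_mem_Wset_of_mem_Vset (htri : G.CliqueFree 3) {j : ZMod 5}
    (hw : w ∈ Wset G c i) (hv : v ∈ Vset G c j) (hj : j = i - 1 ∨ j = i + 1) : ¬ G.Adj w v :=
  fun hwv => isIndepSet_neighborSet_of_triangleFree G htri (c j) ((hw.2 j).2 hj).symm
    ((hv.2 j).2 rfl).symm (G.ne_of_adj hwv) hwv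

end FiveCycle

theorem Wset_complete_Vset_general (G : SimpleGraph V) (htri : G.CliqueFree 3)
    (hS : IsEmpty (S122 ↪g G)) (c : ZMod 5 → V)
    (hC : ∀ i j, G.Adj (c i) (c j) ↔ (j = i + 1 ∨ i = j + 1)) :
    ∀ i : ZMod 5,
      (∀ w ∈ Wset G c i, ∀ v ∈ Vset G c i, G.Adj w v) ∧
      (∀ w ∈ Wset G c i, ∀ v ∈ Vset G c (i - 1), ¬ G.Adj w v) ∧
      (∀ w ∈ Wset G c i, ∀ v ∈ Vset G c (i + 1), ¬ G.Adj w v) :=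
  fun _ => ⟨fun _ hw _ hv => adj_of_mem_Wset_of_mem_Vset hS hC hw hv,
    fun _ hw _ hv => not_adj_of_mem_Wset_of_mem_Vset htri hw hv (.inl rfl),
    fun _ hw _ hv => not_adj_of_mem_Wset_of_mem_Vset htri hw hv (.inr rfl)⟩

/-- `W_i` is complete to `V_i` and anti-complete to `V_{i-1} ∪ V_{i+1}`. -/
theorem Wset_complete_Vset (G : SimpleGraph V) (htri : G.CliqueFree 3)
    (hS : IsEmpty (S122 ↪g G)) (c : ZMod 5 → V) (hinj : Function.Injective c)
    (hC : ∀ i j, G.Adj (c i) (c j) ↔ (j = i + 1 ∨ i = j + 1)) :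
    ∀ i : ZMod 5,
      (∀ w ∈ Wset G c i, ∀ v ∈ Vset G c i, G.Adj w v) ∧
      (∀ w ∈ Wset G c i, ∀ v ∈ Vset G c (i - 1), ¬ G.Adj w v) ∧
      (∀ w ∈ Wset G c i, ∀ v ∈ Vset G c (i + 1), ¬ G.Adj w v) :=
  Wset_complete_Vset_general G htri hS c hC
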